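/- arXiv:2204.05346 — 6 statements merged into one kernel-verified Lean document; each statement's English description precedes it below -/
import Mathlib

section
/- Let V be a nontrivial finite-dimensional normed vector space over ℂ, T : V →ₗ[ℂ] V a linear endomorphism, and v ∈ V. If T^n v → 0 as n → ∞, then the decay is in fact exponential: there exist constants C > 0 and ρ ∈ (0,1) such that ‖T^n v‖ ≤ C · ρ^n for all n ∈ ℕ. -/
/-!
The vectors whose `T`-orbit tends to zero form a `T`-invariant subspace `W` containing `v`.
On the finite-dimensional space `W`, pointwise convergence of the powers of `S = T|_W` to zero
is convergence in operator norm, so `‖S ^ N‖ < 1` for some `N ≥ 1`. Submultiplicativity of the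
operator norm then gives `‖S ^ n‖ ≤ C ρ ^ n` with `ρ ^ N = max ‖S ^ N‖ (1 / 2)`.
-/

open Filter Topology

namespace Module.End

variable {R M : Type*} [Semiring R] [AddCommMonoid M] [Module R M] [TopologicalSpace M]
  [ContinuousAdd M] [ContinuousConstSMul R M]

def stableSubmodule (T : Module.End R M) : Submodule R M where
  carrier := {x | Tendsto (fun n : ℕ => (T ^ n) x) atTop (𝓝 0)}
  zero_mem' := by simpa using tendsto_const_nhds
  add_mem' {x y} hx hy := by simpa using hx.add hy
  smul_mem' c x hx := by simpa using hx.const_smul c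

theorem mem_stableSubmodule {T : Module.End R M} {x : M} :
    x ∈ stableSubmodule T ↔ Tendsto (fun n : ℕ => (T ^ n) x) atTop (𝓝 0) :=
  Iff.rfl

theorem mapsTo_stableSubmodule (T : Module.End R M) :
    ∀ x ∈ stableSubmodule T, T x ∈ stableSubmodule T := by
  intro x hx
  rw [mem_stableSubmodule] at hx ⊢
  simpa only [Function.comp_def, pow_succ, Module.End.mul_apply]
    using hx.comp (tendsto_add_atTop_nat 1)

end Module.End

theorem ContinuousLinearMap.tendsto_of_tendsto_apply {𝕜 E F ι : Type*}
    [NontriviallyNormedField 𝕜] [CompleteSpace 𝕜] [NormedAddCommGroup E] [NormedSpace 𝕜 E]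
    [FiniteDimensional 𝕜 E] [NormedAddCommGroup F] [NormedSpace 𝕜 F] {l : Filter ι}
    {f : ι → E →L[𝕜] F} {g : E →L[𝕜] F} (h : ∀ x, Tendsto (fun i => f i x) l (𝓝 (g x))) :
    Tendsto f l (𝓝 g) := by
  let b := Module.finBasis 𝕜 E
  obtain ⟨C, -, hC⟩ := b.exists_opNorm_le (F := F)
  have hsum : Tendsto (fun i => C * ∑ j, ‖f i (b j) - g (b j)‖) l (𝓝 0) := by
    simpa using ((tendsto_finsetSum _ fun j _ =>
      tendsto_iff_norm_sub_tendsto_zero.1 (h (b j))).const_mul C)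
  refine tendsto_iff_norm_sub_tendsto_zero.2 <|
    squeeze_zero (fun _ => norm_nonneg _) (fun i => ?_) hsum
  refine hC (Finset.sum_nonneg fun j _ => norm_nonneg _) fun j => ?_
  exact Finset.single_le_sum (f := fun j => ‖f i (b j) - g (b j)‖)
    (fun j _ => norm_nonneg _) (Finset.mem_univ j)

section SeminormedRing

variable {R : Type*} [SeminormedRing R]

theorem norm_pow_mul_add_le (a : R) (N k r : ℕ) : ‖a ^ (N * k + r)‖ ≤ ‖a ^ N‖ ^ k * ‖a ^ r‖ := by
  induction k with
  | zero => simp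
  | succ k ih =>
    calc ‖a ^ (N * (k + 1) + r)‖ = ‖a ^ N * a ^ (N * k + r)‖ := by rw [← pow_add]; ring_nf
      _ ≤ ‖a ^ N‖ * ‖a ^ (N * k + r)‖ := norm_mul_le _ _
      _ ≤ ‖a ^ N‖ * (‖a ^ N‖ ^ k * ‖a ^ r‖) := by gcongr
      _ = ‖a ^ N‖ ^ (k + 1) * ‖a ^ r‖ := by ring

theorem exists_norm_pow_le_mul_pow_of_norm_pow_lt_one {a : R} {N : ℕ} (hN : N ≠ 0)
    (ha : ‖a ^ N‖ < 1) :
    ∃ C : ℝ, 0 < C ∧ ∃ ρ : ℝ, ρ ∈ Set.Ioo (0 : ℝ) 1 ∧ ∀ n : ℕ, ‖a ^ n‖ ≤ C * ρ ^ n := by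
  set q := max ‖a ^ N‖ 2⁻¹
  have hq0 : 0 < q := lt_max_of_lt_right (by norm_num)
  have hq1 : q < 1 := max_lt ha (by norm_num)
  set ρ := q ^ (N⁻¹ : ℝ)
  have hρN : ρ ^ N = q := Real.rpow_inv_natCast_pow hq0.le hN
  have hρ0 : 0 < ρ := Real.rpow_pos_of_pos hq0 _
  have hρ1 : ρ < 1 := Real.rpow_lt_one hq0.le hq1 (by positivity)
  set C := 1 + ∑ r ∈ Finset.range N, ‖a ^ r‖ / ρ ^ r
  have hC0 : 0 < C := by positivity
  have hC : ∀ r < N, ‖a ^ r‖ ≤ C * ρ ^ r := by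
    intro r hr
    rw [← div_le_iff₀ (pow_pos hρ0 r)]
    have := Finset.single_le_sum (f := fun r => ‖a ^ r‖ / ρ ^ r)
      (fun r _ => by positivity) (Finset.mem_range.2 hr)
    linarith
  refine ⟨C, hC0, ρ, ⟨hρ0, hρ1⟩, fun n => ?_⟩
  rw [← Nat.div_add_mod n N]
  calc ‖a ^ (N * (n / N) + n % N)‖ ≤ ‖a ^ N‖ ^ (n / N) * ‖a ^ (n % N)‖ := norm_pow_mul_add_le ..
    _ ≤ (ρ ^ N) ^ (n / N) * (C * ρ ^ (n % N)) := by
      gcongr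
      · exact hρN ▸ le_max_left _ _
      · exact hC _ (Nat.mod_lt _ (Nat.pos_of_ne_zero hN))
    _ = C * ρ ^ (N * (n / N) + n % N) := by ring

theorem exists_norm_pow_le_mul_pow_of_tendsto {a : R}
    (h : Tendsto (fun n : ℕ => ‖a ^ n‖) atTop (𝓝 0)) :
    ∃ C : ℝ, 0 < C ∧ ∃ ρ : ℝ, ρ ∈ Set.Ioo (0 : ℝ) 1 ∧ ∀ n : ℕ, ‖a ^ n‖ ≤ C * ρ ^ n := by
  obtain ⟨N, hN1, hN0⟩ := (h.eventually_lt_const one_pos |>.and (eventually_ne_atTop 0)).exists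
  exact exists_norm_pow_le_mul_pow_of_norm_pow_lt_one hN0 hN1

end SeminormedRing

theorem ContinuousLinearMap.exists_norm_pow_le_mul_pow_of_tendsto_pow_apply {𝕜 E : Type*}
    [NontriviallyNormedField 𝕜] [CompleteSpace 𝕜] [NormedAddCommGroup E] [NormedSpace 𝕜 E]
    [FiniteDimensional 𝕜 E] (S : E →L[𝕜] E)
    (h : ∀ x, Tendsto (fun n : ℕ => (S ^ n) x) atTop (𝓝 0)) :
    ∃ C : ℝ, 0 < C ∧ ∃ ρ : ℝ, ρ ∈ Set.Ioo (0 : ℝ) 1 ∧ ∀ n : ℕ, ‖S ^ n‖ ≤ C * ρ ^ n :=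
  exists_norm_pow_le_mul_pow_of_tendsto <| tendsto_zero_iff_norm_tendsto_zero.1 <|
    ContinuousLinearMap.tendsto_of_tendsto_apply h

theorem power_orbit_tendsto_zero_exponential_decay_general
    {V : Type*} [NormedAddCommGroup V] [NormedSpace ℂ V]
    [FiniteDimensional ℂ V]
    (T : V →ₗ[ℂ] V) (v : V)
    (h : Filter.Tendsto (fun n : ℕ => (T ^ n) v) Filter.atTop (nhds 0)) :
    ∃ C : ℝ, 0 < C ∧ ∃ ρ : ℝ, ρ ∈ Set.Ioo (0 : ℝ) 1 ∧
      ∀ n : ℕ, ‖(T ^ n) v‖ ≤ C * ρ ^ n := by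
  let S : Module.End.stableSubmodule T →L[ℂ] Module.End.stableSubmodule T :=
    (T.restrict (Module.End.mapsTo_stableSubmodule T)).toContinuousLinearMap
  have hS_apply (n : ℕ) (x : Module.End.stableSubmodule T) : ((S ^ n) x : V) = (T ^ n) x := by
    rw [← ContinuousLinearMap.coe_coe, S.toLinearMap_pow]
    change ((T.restrict (Module.End.mapsTo_stableSubmodule T) ^ n) x : V) = _
    rw [Module.End.pow_restrict]
    rfl
  obtain ⟨C, hC, ρ, ⟨hρ0, hρ1⟩, hbound⟩ :=
    S.exists_norm_pow_le_mul_pow_of_tendsto_pow_apply fun x => by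
      simpa only [tendsto_subtype_rng, hS_apply, zero_apply, ZeroMemClass.coe_zero]
        using Module.End.mem_stableSubmodule.1 x.2
  refine ⟨C * (‖v‖ + 1), by positivity, ρ, ⟨hρ0, hρ1⟩, fun n => ?_⟩
  let x : Module.End.stableSubmodule T := ⟨v, Module.End.mem_stableSubmodule.2 h⟩
  calc ‖(T ^ n) v‖ = ‖((S ^ n) x : V)‖ := by rw [hS_apply]
    _ = ‖(S ^ n) x‖ := rfl
    _ ≤ ‖S ^ n‖ * ‖v‖ := (S ^ n).le_opNorm _
    _ ≤ C * ρ ^ n * (‖v‖ + 1) := by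
        gcongr
        exacts [hbound n, le_add_of_nonneg_right zero_le_one]
    _ = C * (‖v‖ + 1) * ρ ^ n := by ring

/-- If `T` is a linear endomorphism of a nontrivial finite-dimensional normed complex
vector space and `T^n v → 0`, then `‖T^n v‖` decays exponentially. -/
theorem power_orbit_tendsto_zero_exponential_decay
    {V : Type*} [NormedAddCommGroup V] [NormedSpace ℂ V]
    [FiniteDimensional ℂ V] [Nontrivial V]
    (T : V →ₗ[ℂ] V) (v : V)
    (h : Filter.Tendsto (fun n : ℕ => (T ^ n) v) Filter.atTop (nhds 0)) :
    ∃ C : ℝ, 0 < C ∧ ∃ ρ : ℝ, ρ ∈ Set.Ioo (0 : ℝ) 1 ∧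
      ∀ n : ℕ, ‖(T ^ n) v‖ ≤ C * ρ ^ n :=
  power_orbit_tendsto_zero_exponential_decay_general T v h
end

section
/- Let V be a finite-dimensional vector space over ℂ with a norm, T : V →ₗ[ℂ] V a linear endomorphism, and v ∈ V such that the orbit (T^n v)_{n∈ℕ} is bounded in norm. Then v lies in the sum of (i) the generalized eigenspaces of T for eigenvalues μ with |μ| < 1 and (ii) the ordinary eigenspaces ker(T − μ·id) for eigenvalues μ with |μ| = 1. In particular, no component of v lies in a generalized (non-ordinary) eigenspace for an eigenvalue of modulus 1 or in any generalized eigenspace for an eigenvalue of modulus greater than 1. -/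
open Module DirectSum

/-- Orbit of an eigenvector. -/
private lemma orbit_eig {V : Type*} [AddCommGroup V] [Module ℂ V]
    (T : V →ₗ[ℂ] V) {μ : ℂ} {w : V} (hw : T w = μ • w) (n : ℕ) :
    (T ^ n) w = μ ^ n • w := by
  induction n with
  | zero => simp
  | succ n ih =>
      rw [pow_succ', Module.End.mul_apply, ih, LinearMap.map_smul, hw, smul_smul, ← pow_succ]

private lemma orbit_bdd_shift {V : Type*} [NormedAddCommGroup V] [NormedSpace ℂ V]
    [FiniteDimensional ℂ V] (T : V →ₗ[ℂ] V) {μ : ℂ} {w : V}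
    (hb : ∃ M : ℝ, ∀ n : ℕ, ‖(T ^ n) w‖ ≤ M) :
    ∃ M : ℝ, ∀ n : ℕ, ‖(T ^ n) ((T - μ • 1) w)‖ ≤ M := by
  obtain ⟨M, hM⟩ := hb
  set S : V →ₗ[ℂ] V := T - μ • 1 with hS
  obtain ⟨C, hC0, hC⟩ := (LinearMap.toContinuousLinearMap S).bound
  have hcomm : ∀ n : ℕ, (T ^ n) (S w) = S ((T ^ n) w) := by
    intro n
    have hc : (T ^ n) * S = S * (T ^ n) := by
      have : Commute (T ^ n) S :=
        Commute.sub_right ((Commute.refl T).pow_left n)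
          (Commute.smul_right (Commute.one_right (T ^ n)) μ)
      exact this
    calc (T ^ n) (S w) = ((T ^ n) * S) w := rfl
      _ = (S * (T ^ n)) w := by rw [hc]
      _ = S ((T ^ n) w) := rfl
  refine ⟨C * M, fun n => ?_⟩
  rw [hcomm n]
  calc ‖S ((T ^ n) w)‖ ≤ C * ‖(T ^ n) w‖ := hC _
    _ ≤ C * M := by nlinarith [hM n, norm_nonneg ((T ^ n) w)]

private lemma lemmaA {V : Type*} [NormedAddCommGroup V] [NormedSpace ℂ V]
    [FiniteDimensional ℂ V] (T : V →ₗ[ℂ] V) {μ : ℂ} (hμ : 1 < ‖μ‖) :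
    ∀ k : ℕ, ∀ w : V, ((T - μ • 1) ^ k) w = 0 →
      (∃ M : ℝ, ∀ n : ℕ, ‖(T ^ n) w‖ ≤ M) → w = 0 := by
  intro k
  induction k with
  | zero => intro w h _; simpa using h
  | succ k ih =>
      intro w h hb
      have hSw : (T - μ • 1) w = 0 := by
        by_cases hw0 : w = 0
        · simp [hw0]
        apply ih
        · have : ((T - μ • 1) ^ k) ((T - μ • 1) w) = ((T - μ • 1) ^ (k + 1)) w := by
            rw [pow_succ]; rfl
          rw [this]; exact h
        · exact orbit_bdd_shift T hb
      have heig : T w = μ • w := by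
        have := hSw
        rw [LinearMap.sub_apply, LinearMap.smul_apply, Module.End.one_apply,
          sub_eq_zero] at this
        exact this
      by_contra hw0
      obtain ⟨M, hM⟩ := hb
      obtain ⟨n, hn⟩ := pow_unbounded_of_one_lt (M / ‖w‖) hμ
      have hwpos : (0 : ℝ) < ‖w‖ := norm_pos_iff.mpr hw0
      have h1 : M < ‖μ‖ ^ n * ‖w‖ := by
        rw [div_lt_iff₀ hwpos] at hn; linarith
      have h2 : ‖(T ^ n) w‖ = ‖μ‖ ^ n * ‖w‖ := by
        rw [orbit_eig T heig, norm_smul, norm_pow]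
      have := hM n
      rw [h2] at this
      linarith

private lemma lemmaB {V : Type*} [NormedAddCommGroup V] [NormedSpace ℂ V]
    [FiniteDimensional ℂ V] (T : V →ₗ[ℂ] V) {μ : ℂ} (hμ : ‖μ‖ = 1) :
    ∀ k : ℕ, ∀ w : V, ((T - μ • 1) ^ k) w = 0 →
      (∃ M : ℝ, ∀ n : ℕ, ‖(T ^ n) w‖ ≤ M) → (T - μ • 1) w = 0 := by
  intro k
  induction k with
  | zero => intro w h _; simp at h; simp [h]
  | succ k ih =>
      intro w h hb
      set w' : V := (T - μ • 1) w with hw'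
      have hSw' : (T - μ • 1) w' = 0 := by
        apply ih
        · have : ((T - μ • 1) ^ k) ((T - μ • 1) w) = ((T - μ • 1) ^ (k + 1)) w := by
            rw [pow_succ]; rfl
          rw [hw', this]; exact h
        · exact orbit_bdd_shift T hb
      have heig' : T w' = μ • w' := by
        rw [LinearMap.sub_apply, LinearMap.smul_apply, Module.End.one_apply,
          sub_eq_zero] at hSw'
        exact hSw'
      have hTw : T w = μ • w + w' := by
        rw [hw', LinearMap.sub_apply, LinearMap.smul_apply, Module.End.one_apply]
        abel
      -- formula for the orbit
      have key : ∀ n : ℕ, (T ^ (n + 1)) w = μ ^ (n + 1) • w + (((n : ℂ) + 1) * μ ^ n) • w' := by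
        intro n
        induction n with
        | zero => simpa using hTw
        | succ n ihn =>
            rw [pow_succ', Module.End.mul_apply, ihn]
            rw [map_add, LinearMap.map_smul, LinearMap.map_smul, hTw, heig']
            push_cast
            module
      -- boundedness forces w' = 0
      by_contra hne
      have hw'0 : w' ≠ 0 := hne
      have hw'pos : (0 : ℝ) < ‖w'‖ := norm_pos_iff.mpr hw'0
      obtain ⟨M, hM⟩ := hb
      obtain ⟨n, hn⟩ := exists_nat_gt ((M + ‖w‖) / ‖w'‖)
      have hnorm : ((n : ℝ) + 1) * ‖w'‖ ≤ M + ‖w‖ := by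
        have h1 : ‖(((n : ℂ) + 1) * μ ^ n) • w'‖
            ≤ ‖(T ^ (n + 1)) w‖ + ‖μ ^ (n + 1) • w‖ := by
          have : (((n : ℂ) + 1) * μ ^ n) • w'
              = (T ^ (n + 1)) w - μ ^ (n + 1) • w := by rw [key n]; abel
          rw [this]
          exact norm_sub_le _ _
        have h2 : ‖(((n : ℂ) + 1) * μ ^ n) • w'‖ = ((n : ℝ) + 1) * ‖w'‖ := by
          rw [norm_smul, norm_mul, norm_pow, hμ, one_pow, mul_one]
          congr 1
          have : ‖((n : ℂ) + 1)‖ = ‖((n + 1 : ℕ) : ℂ)‖ := by push_cast; ring_nf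
          rw [this, Complex.norm_natCast]
          push_cast; ring
        have h3 : ‖μ ^ (n + 1) • w‖ = ‖w‖ := by
          rw [norm_smul, norm_pow, hμ, one_pow, one_mul]
        rw [h2, h3] at h1
        linarith [hM (n + 1)]
      rw [div_lt_iff₀ hw'pos] at hn
      nlinarith

/-- If the orbit `(T^n v)` of a vector `v` under a linear endomorphism `T` of a
finite-dimensional normed complex vector space is bounded, then `v` lies in the sum of
the generalized eigenspaces for eigenvalues of modulus `< 1` and the (ordinary)
eigenspaces for eigenvalues of modulus `= 1`. -/
theorem bounded_orbit_mem_sup_genEigenspaces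
    {V : Type*} [NormedAddCommGroup V] [NormedSpace ℂ V] [FiniteDimensional ℂ V]
    (T : V →ₗ[ℂ] V) (v : V)
    (hbdd : ∃ M : ℝ, ∀ n : ℕ, ‖(T ^ n) v‖ ≤ M) :
    v ∈ (⨆ μ ∈ {μ : ℂ | ‖μ‖ < 1}, (Module.End.genEigenspace T μ ⊤)) ⊔
        (⨆ μ ∈ {μ : ℂ | ‖μ‖ = 1}, (Module.End.eigenspace T μ)) := by
  classical
  set E : ℂ → Submodule ℂ V := fun μ => Module.End.genEigenspace T μ ⊤ with hE
  have hInd : iSupIndep E := Module.End.independent_genEigenspace T ⊤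
  have hTop : (⨆ μ, E μ) = ⊤ := Module.End.iSup_maxGenEigenspace_eq_top T
  have hI : DirectSum.IsInternal E :=
    DirectSum.isInternal_submodule_of_iSupIndep_of_iSup_eq_top hInd hTop
  set e : (⨁ (μ : ℂ), E μ) ≃ₗ[ℂ] V := LinearEquiv.ofBijective (DirectSum.coeLinearMap E) hI
    with he
  -- projections
  set π : ℂ → (V →ₗ[ℂ] V) := fun μ =>
    (E μ).subtype ∘ₗ (DirectSum.component ℂ ℂ (fun μ => E μ) μ) ∘ₗ e.symm.toLinearMap
    with hπ
  have hπ_apply : ∀ μ (x : V), π μ x = ((e.symm x) μ : V) := fun μ x => rfl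
  have hπ_mem : ∀ μ (x : V), π μ x ∈ E μ := fun μ x => ((e.symm x) μ).2
  have hπ_of : ∀ μ ν (x : V), x ∈ E ν → π μ x = if μ = ν then x else 0 := by
    intro μ ν x hx
    rcases eq_or_ne μ ν with rfl | hne
    · rw [hπ_apply, hI.ofBijective_coeLinearMap_of_mem hx]
      simp
    · rw [hπ_apply, hI.ofBijective_coeLinearMap_of_mem_ne hne.symm hx]
      simp [hne]
  -- projections commute with T
  have hmaps : ∀ ν (x : V), x ∈ E ν → T x ∈ E ν := fun ν x hx =>
    Module.End.mapsTo_genEigenspace_of_comm (Commute.refl T) ν ⊤ hx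
  have hπT : ∀ μ (x : V), π μ (T x) = T (π μ x) := by
    intro μ x
    have hx : x ∈ ⨆ ν, E ν := hTop ▸ Submodule.mem_top
    induction hx using Submodule.iSup_induction' with
    | mem ν y hy =>
        rw [hπ_of μ ν y hy, hπ_of μ ν (T y) (hmaps ν y hy)]
        split <;> simp
    | zero => simp
    | add y z _ _ hy hz => simp only [map_add, hy, hz]
  have hπTn : ∀ μ (n : ℕ) (x : V), π μ ((T ^ n) x) = (T ^ n) (π μ x) := by
    intro μ n
    induction n with
    | zero => simp
    | succ n ih =>
        intro x
        rw [pow_succ, Module.End.mul_apply, Module.End.mul_apply, ih, hπT]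
  -- each projection of v has a bounded orbit
  have hbddπ : ∀ μ, ∃ M : ℝ, ∀ n : ℕ, ‖(T ^ n) (π μ v)‖ ≤ M := by
    intro μ
    obtain ⟨M, hM⟩ := hbdd
    obtain ⟨C, hC0, hC⟩ := (LinearMap.toContinuousLinearMap (π μ)).bound
    refine ⟨C * M, fun n => ?_⟩
    rw [← hπTn]
    calc ‖π μ ((T ^ n) v)‖ ≤ C * ‖(T ^ n) v‖ := hC _
      _ ≤ C * M := by nlinarith [hM n, norm_nonneg ((T ^ n) v)]
  -- decomposition of v as a finite sum of projections
  have hsum : v = ∑ μ ∈ (e.symm v).support, π μ v := by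
    have h1 : (∑ μ ∈ (e.symm v).support,
        DirectSum.of (fun μ => (E μ : Type _)) μ ((e.symm v) μ)) = e.symm v :=
      DirectSum.sum_support_of _
    calc v = e.toLinearMap (e.symm v) := (e.apply_symm_apply v).symm
      _ = e.toLinearMap (∑ μ ∈ (e.symm v).support,
            DirectSum.of (fun μ => (E μ : Type _)) μ ((e.symm v) μ)) := by rw [h1]
      _ = ∑ μ ∈ (e.symm v).support,
            e.toLinearMap (DirectSum.of (fun μ => (E μ : Type _)) μ ((e.symm v) μ)) :=
          map_sum _ _ _
      _ = ∑ μ ∈ (e.symm v).support, π μ v := by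
          refine Finset.sum_congr rfl fun μ _ => ?_
          rw [hπ_apply]
          exact DirectSum.coeLinearMap_of E μ _
  -- each projection lies in the target submodule
  set W : Submodule ℂ V :=
    (⨆ μ ∈ {μ : ℂ | ‖μ‖ < 1}, (Module.End.genEigenspace T μ ⊤)) ⊔
      (⨆ μ ∈ {μ : ℂ | ‖μ‖ = 1}, (Module.End.eigenspace T μ)) with hW
  have hterm : ∀ μ : ℂ, π μ v ∈ W := by
    intro μ
    rcases lt_trichotomy ‖μ‖ 1 with hlt | heq | hgt
    · apply Submodule.mem_sup_left
      exact Submodule.mem_iSup_of_mem μ (Submodule.mem_iSup_of_mem hlt (hπ_mem μ v))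
    · -- modulus one: genuine eigenvector
      have hmem : π μ v ∈ Module.End.genEigenspace T μ ⊤ := hπ_mem μ v
      rw [Module.End.mem_genEigenspace_top] at hmem
      obtain ⟨k, hk⟩ := hmem
      rw [LinearMap.mem_ker] at hk
      have h0 : (T - μ • 1) (π μ v) = 0 := lemmaB T heq k (π μ v) hk (hbddπ μ)
      have heigv : π μ v ∈ Module.End.eigenspace T μ := by
        rw [Module.End.mem_eigenspace_iff]
        rw [LinearMap.sub_apply, LinearMap.smul_apply, Module.End.one_apply,
          sub_eq_zero] at h0
        exact h0
      apply Submodule.mem_sup_right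
      exact Submodule.mem_iSup_of_mem μ (Submodule.mem_iSup_of_mem heq heigv)
    · have hmem : π μ v ∈ Module.End.genEigenspace T μ ⊤ := hπ_mem μ v
      rw [Module.End.mem_genEigenspace_top] at hmem
      obtain ⟨k, hk⟩ := hmem
      rw [LinearMap.mem_ker] at hk
      have h0 : π μ v = 0 := lemmaA T hgt k (π μ v) hk (hbddπ μ)
      rw [h0]
      exact W.zero_mem
  rw [hsum]
  exact Submodule.sum_mem W fun μ _ => hterm μ
end

section
/- Let d, R ∈ ℕ with R ≥ 1, let C_0, …, C_R be d×d complex matrices such that the polynomial z ↦ det(Σ_{n=0}^R z^{R−n} C_n) is not identically zero (the matrix pencil is regular), and let γ : ℕ → ℂ^d be a bounded sequence satisfying Σ_{n=0}^R C_n · γ(r+n) = 0 for all r ∈ ℕ. Then the generating function of each component is rational: for each index j there exist polynomials P_j, Q ∈ ℂ[z] with Q not identically zero such that Q(z) · Σ_{r=0}^∞ γ(r)_j z^r = P_j(z) for all z with |z| < 1. -/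
/-!
Let `g(z) = ∑ᵣ zʳ γ(r)`, which converges on the unit disk since `γ` is bounded. Splitting off the
first `n` terms, `z^{R-n} Cₙ g(z)` is a polynomial in the initial values plus
`z^R Cₙ ∑ᵣ zʳ γ(r+n)`; summed over `n`, these tails add up to `z^R ∑ᵣ zʳ ∑ₙ Cₙ γ(r+n) = 0`.
Hence `L(z) g(z) = Φ(z)` for a vector `Φ` of polynomials, and multiplying by the adjugate gives
`det L(z) · g(z) = adj L(z) Φ(z)`, where `det L ≠ 0` by regularity of the pencil.
-/

open Polynomial Matrix

theorem HasSum.matrix_mulVec {ι m n R : Type*} [Fintype n] [CommSemiring R] [TopologicalSpace R]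
    [IsTopologicalSemiring R] {f : ι → n → R} {a : n → R} (h : HasSum f a) (A : Matrix m n R) :
    HasSum (fun i => A *ᵥ f i) (A *ᵥ a) :=
  h.map A.mulVecLin (Continuous.matrix_mulVec continuous_const continuous_id)

section GeneratingFunction

variable {𝕜 E : Type*} [NormedField 𝕜] [NormedAddCommGroup E] [NormedSpace 𝕜 E]

theorem summable_pow_smul_of_norm_le [CompleteSpace E] {γ : ℕ → E} {M : ℝ}
    (hM : ∀ r, ‖γ r‖ ≤ M) {z : 𝕜} (hz : ‖z‖ < 1) : Summable fun r => z ^ r • γ r := by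
  refine .of_norm_bounded ((summable_geometric_of_lt_one (norm_nonneg z) hz).mul_left M)
    fun r => ?_
  rw [norm_smul, norm_pow, mul_comm]
  exact mul_le_mul_of_nonneg_right (hM r) (by positivity)

theorem tsum_pow_smul_eq_sum_add_pow_smul_tsum {γ : ℕ → E} {z : 𝕜}
    (hs : Summable fun r => z ^ r • γ r) (k : ℕ) :
    ∑' r, z ^ r • γ r = ∑ r ∈ Finset.range k, z ^ r • γ r + z ^ k • ∑' r, z ^ r • γ (r + k) := by
  rw [← hs.sum_add_tsum_nat_add k, ← tsum_const_smul'']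
  simp only [pow_add, mul_comm, mul_smul]

end GeneratingFunction

section Pencil

variable {K m : Type*} [CommRing K]

noncomputable def matrixPencil {R : ℕ} (C : Fin (R + 1) → Matrix m m K) : Matrix m m K[X] :=
  ∑ n : Fin (R + 1), (X ^ (R - (n : ℕ)) : K[X]) • (C n).map Polynomial.C

theorem matrixPencil_map_eval {R : ℕ} (C : Fin (R + 1) → Matrix m m K) (z : K) :
    (matrixPencil C).map (eval z) = ∑ n : Fin (R + 1), z ^ (R - (n : ℕ)) • C n := by
  ext i k
  simp only [matrixPencil, map_apply, Matrix.sum_apply, Matrix.smul_apply, smul_eq_mul,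
    eval_finsetSum, eval_mul, eval_C, eval_pow, eval_X]

theorem eval_det_matrixPencil [Fintype m] [DecidableEq m] {R : ℕ}
    (C : Fin (R + 1) → Matrix m m K) (z : K) :
    eval z (matrixPencil C).det = (∑ n : Fin (R + 1), z ^ (R - (n : ℕ)) • C n).det := by
  rw [← matrixPencil_map_eval, ← coe_evalRingHom, RingHom.map_det]
  rfl

theorem det_matrixPencil_ne_zero [Fintype m] [DecidableEq m] {R : ℕ}
    {C : Fin (R + 1) → Matrix m m K}
    (hreg : ∃ z : K, (∑ n : Fin (R + 1), z ^ (R - (n : ℕ)) • C n).det ≠ 0) :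
    (matrixPencil C).det ≠ 0 := by
  obtain ⟨z, hz⟩ := hreg
  intro h
  exact hz (by rw [← eval_det_matrixPencil, h, eval_zero])

noncomputable def pencilInitialTerm [Fintype m] {R : ℕ} (C : Fin (R + 1) → Matrix m m K)
    (γ : ℕ → m → K) : m → K[X] :=
  fun i => ∑ n : Fin (R + 1), ∑ r ∈ Finset.range n,
    X ^ (R - (n : ℕ) + r) * Polynomial.C ((C n *ᵥ γ r) i)

theorem eval_pencilInitialTerm [Fintype m] {R : ℕ} (C : Fin (R + 1) → Matrix m m K)
    (γ : ℕ → m → K) (z : K) :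
    (fun i => eval z (pencilInitialTerm C γ i)) =
      ∑ n : Fin (R + 1), ∑ r ∈ Finset.range n, z ^ (R - (n : ℕ) + r) • (C n *ᵥ γ r) := by
  funext i
  simp only [pencilInitialTerm, eval_finsetSum, eval_mul, eval_pow, eval_X, eval_C,
    Finset.sum_apply, Pi.smul_apply, smul_eq_mul]

end Pencil

theorem pencil_mulVec_tsum_pow_smul {𝕜 m : Type*} [NormedField 𝕜] [CompleteSpace 𝕜] [Fintype m]
    {R : ℕ} {C : Fin (R + 1) → Matrix m m 𝕜} {γ : ℕ → m → 𝕜} {M : ℝ} (hM : ∀ r, ‖γ r‖ ≤ M)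
    (hrec : ∀ r, ∑ n : Fin (R + 1), C n *ᵥ γ (r + n) = 0) {z : 𝕜} (hz : ‖z‖ < 1) :
    (∑ n : Fin (R + 1), z ^ (R - (n : ℕ)) • C n) *ᵥ ∑' r, z ^ r • γ r =
      ∑ n : Fin (R + 1), ∑ r ∈ Finset.range n, z ^ (R - (n : ℕ) + r) • (C n *ᵥ γ r) := by
  have hs (k : ℕ) : Summable fun r => z ^ r • γ (r + k) :=
    summable_pow_smul_of_norm_le (fun r => hM (r + k)) hz
  have htail : ∑ n : Fin (R + 1), C n *ᵥ ∑' r, z ^ r • γ (r + n) = 0 := by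
    calc ∑ n : Fin (R + 1), C n *ᵥ ∑' r, z ^ r • γ (r + n)
        = ∑ n : Fin (R + 1), ∑' r, z ^ r • (C n *ᵥ γ (r + n)) := by
          refine Finset.sum_congr rfl fun n _ => ?_
          simp only [← mulVec_smul]
          exact ((hs n).hasSum.matrix_mulVec (C n)).tsum_eq.symm
      _ = ∑' r, z ^ r • ∑ n : Fin (R + 1), C n *ᵥ γ (r + n) := by
          simp only [Finset.smul_sum]
          refine (Summable.tsum_finsetSum fun n _ => ?_).symm
          simpa only [← mulVec_smul] using ((hs n).hasSum.matrix_mulVec (C n)).summable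
      _ = 0 := by simp [hrec]
  rw [sum_mulVec]
  calc ∑ n : Fin (R + 1), (z ^ (R - (n : ℕ)) • C n) *ᵥ ∑' r, z ^ r • γ r
      = ∑ n : Fin (R + 1), (∑ r ∈ Finset.range n, z ^ (R - (n : ℕ) + r) • (C n *ᵥ γ r) +
          z ^ R • (C n *ᵥ ∑' r, z ^ r • γ (r + n))) := by
        refine Finset.sum_congr rfl fun n _ => ?_
        rw [tsum_pow_smul_eq_sum_add_pow_smul_tsum (by simpa using hs 0) n, smul_mulVec,
          mulVec_add, mulVec_sum, mulVec_smul, smul_add, Finset.smul_sum, smul_smul, ← pow_add,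
          Nat.sub_add_cancel n.is_le]
        simp only [mulVec_smul, smul_smul, pow_add]
    _ = _ := by rw [Finset.sum_add_distrib, ← Finset.smul_sum, htail, smul_zero, add_zero]

theorem Matrix.eval_det_smul_eq_eval_adjugate_mulVec {K m : Type*} [Fintype m] [DecidableEq m]
    [CommRing K] {L : Matrix m m K[X]} {Φ : m → K[X]} {z : K} {v : m → K}
    (h : L.map (eval z) *ᵥ v = fun i => eval z (Φ i)) :
    eval z L.det • v = fun i => eval z ((L.adjugate *ᵥ Φ) i) := by
  have hdet : eval z L.det = (L.map (eval z)).det := (evalRingHom z).map_det L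
  have hadj : (L.map (eval z)).adjugate = L.adjugate.map (eval z) :=
    ((evalRingHom z).map_adjugate L).symm
  rw [hdet, ← one_mulVec v, ← smul_mulVec, ← adjugate_mul, ← mulVec_mulVec, h, hadj]
  funext i
  exact ((evalRingHom z).map_mulVec L.adjugate Φ i).symm

theorem matrix_difference_generating_function_rational_general
    (d R : ℕ)
    (C : Fin (R + 1) → Matrix (Fin d) (Fin d) ℂ)
    (hreg : ∃ z : ℂ, (∑ n : Fin (R + 1), z ^ (R - (n : ℕ)) • C n).det ≠ 0)
    (γ : ℕ → (Fin d → ℂ))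
    (hbdd : ∃ M : ℝ, ∀ r : ℕ, ‖γ r‖ ≤ M)
    (hrec : ∀ r : ℕ, ∑ n : Fin (R + 1), (C n).mulVec (γ (r + n)) = 0) :
    ∀ j : Fin d, ∃ P Q : Polynomial ℂ, Q ≠ 0 ∧
      ∀ z : ℂ, ‖z‖ < 1 →
        Q.eval z * (∑' r : ℕ, γ r j * z ^ r) = P.eval z := by
  obtain ⟨M, hM⟩ := hbdd
  intro j
  refine ⟨((matrixPencil C).adjugate *ᵥ pencilInitialTerm C γ) j, (matrixPencil C).det,
    det_matrixPencil_ne_zero hreg, fun z hz => ?_⟩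
  have hs : Summable fun r => z ^ r • γ r := summable_pow_smul_of_norm_le hM hz
  have hadj := Matrix.eval_det_smul_eq_eval_adjugate_mulVec (Φ := pencilInitialTerm C γ) <| by
    rw [matrixPencil_map_eval, pencil_mulVec_tsum_pow_smul hM hrec hz, eval_pencilInitialTerm]
  have hcoord : ∑' r, γ r j * z ^ r = (∑' r, z ^ r • γ r) j := by
    rw [tsum_apply hs]
    simp only [Pi.smul_apply, smul_eq_mul, mul_comm]
  rw [hcoord, ← smul_eq_mul, ← Pi.smul_apply, hadj]

/-- For a regular matrix pencil `L(z) = ∑ₙ z^{R-n} Cₙ` (its determinant is not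
identically zero) and a bounded solution `γ` of the matrix difference equation
`∑ₙ Cₙ γ(r+n) = 0`, the generating function of each component of `γ` is a rational
function: `Q(z) ∑ᵣ γ(r)ⱼ zʳ = Pⱼ(z)` on the open unit disk for some polynomials
`Pⱼ, Q` with `Q ≠ 0`. -/
theorem matrix_difference_generating_function_rational
    (d R : ℕ) (hR : 1 ≤ R)
    (C : Fin (R + 1) → Matrix (Fin d) (Fin d) ℂ)
    (hreg : ∃ z : ℂ, (∑ n : Fin (R + 1), z ^ (R - (n : ℕ)) • C n).det ≠ 0)
    (γ : ℕ → (Fin d → ℂ))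
    (hbdd : ∃ M : ℝ, ∀ r : ℕ, ‖γ r‖ ≤ M)
    (hrec : ∀ r : ℕ, ∑ n : Fin (R + 1), (C n).mulVec (γ (r + n)) = 0) :
    ∀ j : Fin d, ∃ P Q : Polynomial ℂ, Q ≠ 0 ∧
      ∀ z : ℂ, ‖z‖ < 1 →
        Q.eval z * (∑' r : ℕ, γ r j * z ^ r) = P.eval z :=
  matrix_difference_generating_function_rational_general d R C hreg γ hbdd hrec
end

section
/- Let α_1, …, α_m ∈ ℂ be distinct and nonzero, let p_1, …, p_m ∈ ℂ[X], and set f(r) := Σ_{i=1}^m p_i(r) α_i^r for r ∈ ℕ. If f(r) → 0 as r → ∞, then for every i with p_i ≠ 0 one has |α_i| < 1; consequently there exist C > 0 and ρ ∈ (0,1) with |f(r)| ≤ C ρ^r for all r. -/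
open scoped BigOperators
open Polynomial Filter

lemma expoly_aux_real (p : Polynomial ℂ) {t : ℝ} (ht0 : 0 ≤ t) (ht : t < 1) :
    Tendsto (fun r : ℕ => ‖p.eval (r : ℂ)‖ * t ^ r) atTop (nhds 0) := by
  apply squeeze_zero (g := fun r : ℕ =>
      ∑ i ∈ Finset.range (p.natDegree + 1), ‖p.coeff i‖ * ((r : ℝ) ^ i * t ^ r))
  · intro r; positivity
  · intro r
    rw [Polynomial.eval_eq_sum_range]
    calc ‖∑ i ∈ Finset.range (p.natDegree + 1), p.coeff i * (r : ℂ) ^ i‖ * t ^ r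
        ≤ (∑ i ∈ Finset.range (p.natDegree + 1), ‖p.coeff i‖ * (r : ℝ) ^ i) * t ^ r := by
          gcongr
          refine (norm_sum_le _ _).trans ?_
          apply le_of_eq
          congr 1; funext i
          simp [norm_mul, norm_pow]
      _ = _ := by rw [Finset.sum_mul]; congr 1; funext i; ring
  · have := tendsto_finset_sum (Finset.range (p.natDegree + 1))
      (fun i _ => ((tendsto_pow_const_mul_const_pow_of_lt_one i ht0 ht).const_mul ‖p.coeff i‖))
    simpa using this

lemma expoly_aux_cx (p : Polynomial ℂ) {s : ℂ} (hs : ‖s‖ < 1) :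
    Tendsto (fun r : ℕ => p.eval (r : ℂ) * s ^ r) atTop (nhds 0) := by
  rw [tendsto_zero_iff_norm_tendsto_zero]
  simpa [norm_mul, norm_pow] using expoly_aux_real p (norm_nonneg s) hs

lemma expoly_hcomp_coeff (s : Polynomial ℂ) :
    ((s.comp (X + C 1)).coeff s.natDegree) = s.leadingCoeff := by
  have h1 : (s.comp (X + C 1)).natDegree = s.natDegree := by
    rw [Polynomial.natDegree_comp, Polynomial.natDegree_X_add_C, mul_one]
  rw [← h1, Polynomial.coeff_natDegree,
    Polynomial.leadingCoeff_comp (by rw [Polynomial.natDegree_X_add_C]; exact one_ne_zero)]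
  have h2 : (X + C (1 : ℂ)).leadingCoeff = 1 := Polynomial.monic_X_add_C 1
  rw [h2, one_pow, mul_one]

/-- measure of a polynomial: 0 for the zero polynomial, `natDegree + 1` otherwise. -/
noncomputable def expolyMes (q : Polynomial ℂ) : ℕ := if q = 0 then 0 else q.natDegree + 1

lemma expolyMes_le {a : Polynomial ℂ} {n : ℕ} (h : a.natDegree ≤ n) : expolyMes a ≤ n + 1 := by
  unfold expolyMes; split <;> omega

lemma expoly_key : ∀ (N m : ℕ) (α : Fin m → ℂ), Function.Injective α → (∀ i, α i ≠ 0) →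
    ∀ p : Fin m → Polynomial ℂ, (∑ i, expolyMes (p i)) ≤ N →
    Tendsto (fun r : ℕ => ∑ i, (p i).eval (r : ℂ) * α i ^ r) atTop (nhds 0) →
    ∀ i, p i ≠ 0 → ‖α i‖ < 1 := by
  intro N
  induction N with
  | zero =>
    intro m α _ _ p hsum _ i hpi
    exfalso
    have h := Finset.sum_eq_zero_iff.mp (Nat.le_zero.mp hsum) i (Finset.mem_univ i)
    simp [expolyMes, hpi] at h
  | succ N ih =>
    intro m α hinj hne p hsum htend j hpj
    by_contra h1
    push_neg at h1
    set q : Fin m → Polynomial ℂ :=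
      fun i => C (α i) * (p i).comp (X + C 1) - C (α j) * p i with hq_def
    -- the shifted sequence tends to 0
    have hgt : Tendsto (fun r : ℕ => ∑ i, (q i).eval (r : ℂ) * α i ^ r) atTop (nhds 0) := by
      have hshift : Tendsto
          (fun r : ℕ => ∑ i, (p i).eval (((r + 1 : ℕ) : ℂ)) * α i ^ (r + 1)) atTop (nhds 0) :=
        htend.comp (tendsto_add_atTop_nat 1)
      have h2 := hshift.sub (htend.const_mul (α j))
      simp only [mul_zero, sub_zero] at h2
      refine h2.congr fun r => ?_
      rw [Finset.mul_sum, ← Finset.sum_sub_distrib]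
      congr 1; funext i
      have : (q i).eval (r : ℂ) = α i * (p i).eval ((r : ℂ) + 1) - α j * (p i).eval (r : ℂ) := by
        simp [hq_def, Polynomial.eval_comp]
      rw [this]
      push_cast
      ring
    -- measure bounds
    have hmesle : ∀ i, expolyMes (q i) ≤ expolyMes (p i) := by
      intro i
      by_cases hp : p i = 0
      · simp [hq_def, expolyMes, hp]
      · have hd : (q i).natDegree ≤ (p i).natDegree := by
          refine (Polynomial.natDegree_sub_le _ _).trans (max_le ?_ ?_)
          · exact (Polynomial.natDegree_C_mul_le _ _).trans
              (by rw [Polynomial.natDegree_comp, Polynomial.natDegree_X_add_C, mul_one])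
          · exact Polynomial.natDegree_C_mul_le _ _
        have := expolyMes_le hd
        simpa [expolyMes, hp] using this
    have hDq : q j = C (α j) * ((p j).comp (X + C 1) - p j) := by
      rw [hq_def]; ring
    have hmesj : expolyMes (q j) ≤ (p j).natDegree := by
      by_cases hd0 : (p j).natDegree = 0
      · have hC : p j = C ((p j).coeff 0) := Polynomial.eq_C_of_natDegree_eq_zero hd0
        have : q j = 0 := by rw [hDq, hC, Polynomial.C_comp, sub_self, mul_zero]
        simp [expolyMes, this]
      · set D := (p j).comp (X + C 1) - p j with hD_def
        have hDle : D.natDegree ≤ (p j).natDegree := by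
          refine (Polynomial.natDegree_sub_le _ _).trans (max_le ?_ le_rfl)
          rw [Polynomial.natDegree_comp, Polynomial.natDegree_X_add_C, mul_one]
        have hDcoeff : D.coeff ((p j).natDegree) = 0 := by
          rw [hD_def, Polynomial.coeff_sub, expoly_hcomp_coeff, Polynomial.coeff_natDegree,
            sub_self]
        by_cases hD : D = 0
        · have : q j = 0 := by rw [hDq, hD, mul_zero]
          simp [expolyMes, this]
        · have hDlt : D.natDegree < (p j).natDegree := by
            rcases lt_or_eq_of_le hDle with h | h
            · exact h
            · exfalso
              exact hD (Polynomial.leadingCoeff_eq_zero.mp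
                (by rw [Polynomial.leadingCoeff, h]; exact hDcoeff))
          have hqle : (q j).natDegree ≤ D.natDegree := by
            rw [hDq]; exact Polynomial.natDegree_C_mul_le _ _
          have := expolyMes_le hqle
          omega
    have hsum' : (∑ i, expolyMes (q i)) ≤ N := by
      have hA : expolyMes (q j) + 1 ≤ expolyMes (p j) := by
        have : expolyMes (p j) = (p j).natDegree + 1 := by simp [expolyMes, hpj]
        omega
      have hB : ∑ i ∈ Finset.univ.erase j, expolyMes (q i) ≤
          ∑ i ∈ Finset.univ.erase j, expolyMes (p i) :=
        Finset.sum_le_sum fun i _ => hmesle i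
      have e1 : ∑ i, expolyMes (q i) =
          expolyMes (q j) + ∑ i ∈ Finset.univ.erase j, expolyMes (q i) :=
        (Finset.add_sum_erase _ _ (Finset.mem_univ j)).symm
      have e2 : ∑ i, expolyMes (p i) =
          expolyMes (p j) + ∑ i ∈ Finset.univ.erase j, expolyMes (p i) :=
        (Finset.add_sum_erase _ _ (Finset.mem_univ j)).symm
      omega
    have hq1 : ∀ i, q i ≠ 0 → ‖α i‖ < 1 := ih m α hinj hne q hsum' hgt
    -- nonvanishing of q i for i ≠ j
    have hqne : ∀ i, i ≠ j → p i ≠ 0 → q i ≠ 0 := by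
      intro i hij hp h0
      have hc0 : (q i).coeff (p i).natDegree = 0 := by rw [h0]; simp
      rw [hq_def] at hc0
      simp only [Polynomial.coeff_sub, Polynomial.coeff_C_mul, expoly_hcomp_coeff,
        Polynomial.coeff_natDegree] at hc0
      have hlc : (p i).leadingCoeff ≠ 0 := Polynomial.leadingCoeff_ne_zero.mpr hp
      have hz : (α i - α j) * (p i).leadingCoeff = 0 := by linear_combination hc0
      rcases mul_eq_zero.mp hz with h | h
      · exact hij (hinj (by rwa [sub_eq_zero] at h))
      · exact hlc h
    have hother : ∀ i, i ≠ j → p i ≠ 0 → ‖α i‖ < 1 := fun i hij hp => hq1 i (hqne i hij hp)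
    by_cases hqj : q j = 0
    · -- p j is a nonzero constant
      have hD0 : (p j).comp (X + C 1) = p j := by
        rw [hDq] at hqj
        have hC : (C (α j) : Polynomial ℂ) ≠ 0 := by
          simpa using (hne j)
        exact sub_eq_zero.mp ((mul_eq_zero.mp hqj).resolve_left hC)
      have heval1 : ∀ x : ℂ, (p j).eval (x + 1) = (p j).eval x := by
        intro x
        have := congrArg (Polynomial.eval x) hD0
        rwa [Polynomial.eval_comp, Polynomial.eval_add, Polynomial.eval_X,
          Polynomial.eval_C] at this
      have heval : ∀ n : ℕ, (p j).eval (n : ℂ) = (p j).eval 0 := by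
        intro n
        induction n with
        | zero => simp
        | succ n ihn => push_cast; rw [heval1, ihn]
      have hpC : p j = C ((p j).eval 0) := by
        have hroot : p j - C ((p j).eval 0) = 0 := by
          apply Polynomial.eq_zero_of_infinite_isRoot
          apply Set.infinite_of_injective_forall_mem (f := fun n : ℕ => (n : ℂ))
            Nat.cast_injective
          intro n
          simp [Polynomial.IsRoot, heval n]
        linear_combination hroot
      set c := (p j).eval 0 with hc_def
      have hc : c ≠ 0 := fun h => hpj (by rw [hpC, h, map_zero])
      have hrest : Tendsto (fun r : ℕ => ∑ i ∈ Finset.univ.erase j,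
          (p i).eval (r : ℂ) * α i ^ r) atTop (nhds 0) := by
        have h : ∀ i ∈ Finset.univ.erase j, Tendsto
            (fun r : ℕ => (p i).eval (r : ℂ) * α i ^ r) atTop (nhds 0) := by
          intro i hi
          by_cases hp : p i = 0
          · simp [hp]
          · exact expoly_aux_cx _ (hother i (Finset.ne_of_mem_erase hi) hp)
        simpa using tendsto_finset_sum _ h
      have hterm : Tendsto (fun r : ℕ => c * α j ^ r) atTop (nhds 0) := by
        have h2 := htend.sub hrest
        rw [sub_zero] at h2
        refine h2.congr fun r => ?_
        rw [← Finset.add_sum_erase _ _ (Finset.mem_univ j)]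
        have : (p j).eval (r : ℂ) = c := by rw [hpC]; simp
        rw [this]; ring
      have hnorm : Tendsto (fun r : ℕ => ‖c * α j ^ r‖) atTop (nhds 0) := by
        simpa using hterm.norm
      obtain ⟨r, hr⟩ := (hnorm.eventually_lt_const (show (0:ℝ) < ‖c‖ by
        simpa using norm_pos_iff.mpr hc)).exists
      have hge : ‖c‖ ≤ ‖c * α j ^ r‖ := by
        rw [norm_mul, norm_pow]
        nlinarith [one_le_pow₀ (n := r) h1, norm_nonneg c]
      linarith
    · exact absurd (hq1 j hqj) (not_lt.mpr h1)


/-- An exponential polynomial `f(r) = ∑ᵢ pᵢ(r) αᵢ^r` with distinct nonzero bases that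
tends to zero has all its (effective) bases of modulus `< 1` and in fact decays
exponentially. -/
theorem exponential_polynomial_tendsto_zero_exponential_decay
    (m : ℕ) (α : Fin m → ℂ) (hα_inj : Function.Injective α)
    (hα_ne : ∀ i, α i ≠ 0)
    (p : Fin m → Polynomial ℂ)
    (f : ℕ → ℂ)
    (hf : ∀ r : ℕ, f r = ∑ i : Fin m, (p i).eval (r : ℂ) * (α i) ^ r)
    (h0 : Filter.Tendsto f Filter.atTop (nhds 0)) :
    (∀ i : Fin m, p i ≠ 0 → ‖α i‖ < 1) ∧
    ∃ C : ℝ, 0 < C ∧ ∃ ρ : ℝ, ρ ∈ Set.Ioo (0 : ℝ) 1 ∧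
      ∀ r : ℕ, ‖f r‖ ≤ C * ρ ^ r := by
  have part1 : ∀ i : Fin m, p i ≠ 0 → ‖α i‖ < 1 :=
    expoly_key (∑ i, expolyMes (p i)) m α hα_inj hα_ne p le_rfl (h0.congr hf)
  refine ⟨part1, ?_⟩
  set B : NNReal := Finset.univ.sup (fun i => if p i = 0 then 0 else ‖α i‖₊) with hB_def
  have hB1 : (B : ℝ) < 1 := by
    have hlt : B < 1 := by
      rw [hB_def]
      rw [Finset.sup_lt_iff (by norm_num : (⊥ : NNReal) < 1)]
      intro i _
      by_cases hp : p i = 0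
      · simp [hp]
      · rw [if_neg hp]
        exact_mod_cast part1 i hp
    exact_mod_cast hlt
  set ρ : ℝ := ((B : ℝ) + 1) / 2 with hρ_def
  have hρ0 : 0 < ρ := by positivity
  have hρ1 : ρ < 1 := by rw [hρ_def]; linarith
  have hBρ : (B : ℝ) < ρ := by rw [hρ_def]; linarith
  have hterm : ∀ i : Fin m, ∃ C : ℝ, 0 ≤ C ∧
      ∀ r : ℕ, ‖(p i).eval (r : ℂ) * α i ^ r‖ ≤ C * ρ ^ r := by
    intro i
    by_cases hp : p i = 0
    · exact ⟨0, le_rfl, fun r => by simp [hp, le_of_lt (mul_pos zero_lt_one (pow_pos hρ0 r))]⟩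
    · have hαB : ‖α i‖ ≤ (B : ℝ) := by
        have hle : (if p i = 0 then (0 : NNReal) else ‖α i‖₊) ≤ B :=
          Finset.le_sup (f := fun i => if p i = 0 then (0 : NNReal) else ‖α i‖₊) (Finset.mem_univ i)
        rw [if_neg hp] at hle
        exact_mod_cast hle
      have hαρ : ‖α i‖ < ρ := lt_of_le_of_lt hαB hBρ
      have ht0 : 0 ≤ ‖α i‖ / ρ := by positivity
      have ht1 : ‖α i‖ / ρ < 1 := (div_lt_one hρ0).mpr hαρ
      obtain ⟨C, hC⟩ := (expoly_aux_real (p i) ht0 ht1).bddAbove_range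
      refine ⟨C, ?_, fun r => ?_⟩
      · have h00 := hC (Set.mem_range_self 0)
        exact le_trans (by positivity) h00
      · have h1 : ‖(p i).eval (r : ℂ)‖ * (‖α i‖ / ρ) ^ r ≤ C := hC (Set.mem_range_self r)
        have heq : ‖(p i).eval (r : ℂ) * α i ^ r‖ =
            (‖(p i).eval (r : ℂ)‖ * (‖α i‖ / ρ) ^ r) * ρ ^ r := by
          rw [norm_mul, norm_pow, div_pow, mul_assoc,
            div_mul_cancel₀ _ (pow_ne_zero r hρ0.ne')]
        rw [heq]
        exact mul_le_mul_of_nonneg_right h1 (pow_nonneg hρ0.le r)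
  choose C hC0 hCb using hterm
  have hsumC : (0 : ℝ) ≤ ∑ i, C i := Finset.sum_nonneg fun i _ => hC0 i
  refine ⟨(∑ i, C i) + 1, by linarith, ρ, ⟨hρ0, hρ1⟩, fun r => ?_⟩
  rw [hf r]
  calc ‖∑ i : Fin m, (p i).eval (r : ℂ) * α i ^ r‖
      ≤ ∑ i : Fin m, ‖(p i).eval (r : ℂ) * α i ^ r‖ := norm_sum_le _ _
    _ ≤ ∑ i : Fin m, C i * ρ ^ r := Finset.sum_le_sum fun i _ => hCb i r
    _ = (∑ i, C i) * ρ ^ r := by rw [Finset.sum_mul]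
    _ ≤ ((∑ i, C i) + 1) * ρ ^ r := by
        have := pow_pos hρ0 r
        nlinarith
end

section
/- Let α_1, …, α_m ∈ ℂ be distinct and nonzero, let p_1, …, p_m ∈ ℂ[X], and set f(r) := Σ_{i=1}^m p_i(r) α_i^r for r ∈ ℕ. Then for every real s > 0 and every c ∈ ℂ: if r^s · f(r) → c as r → ∞, then c = 0. In other words, a finite exponential polynomial can never be asymptotic to a nonzero multiple of a power-law decay r^{−s} with s > 0. -/
/-!
Let `S` be the shift `u ↦ u (· + 1)` on sequences. On `u(n) aⁿ` the operator `S - a` acts as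
`a Δ` on `u`, so `(S - a)^(deg P + 1)` annihilates `P(n) aⁿ`. Hence `q(S)`, for
`q = ∏_{αᵢ ≠ 1} (X - αᵢ)^(deg pᵢ + 1)`, maps `f` to a polynomial sequence `Q(n)`. Shifts preserve
the limit of `n^s f(n)`, so `n^s Q(n) → q(1) c`. As `s > 0`, `Q(n) → 0`, so `Q = 0`, and
`q(1) c = 0` with `q(1) ≠ 0`.
-/

open Polynomial Filter Topology
open scoped fwdDiff

section Algebra

variable {R : Type*} [CommRing R]

variable (R) in
noncomputable def seqShift : Module.End R (ℕ → R) where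
  toFun u n := u (n + 1)
  map_add' _ _ := rfl
  map_smul' _ _ := rfl

@[simp]
lemma seqShift_apply (u : ℕ → R) (n : ℕ) : seqShift R u n = u (n + 1) := rfl

lemma seqShift_pow_apply (j : ℕ) (u : ℕ → R) (n : ℕ) : (seqShift R ^ j) u n = u (n + j) := by
  induction j generalizing u with
  | zero => rfl
  | succ j ih => rw [pow_succ, Module.End.mul_apply, ih, seqShift_apply, add_assoc]

lemma aeval_seqShift_apply (q : R[X]) (u : ℕ → R) (n : ℕ) :
    aeval (seqShift R) q u n = ∑ j ∈ Finset.range (q.natDegree + 1), q.coeff j * u (n + j) := by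
  simp [aeval_eq_sum_range, LinearMap.sum_apply, Finset.sum_apply, seqShift_pow_apply]

lemma fwdDiff_iter_comp_natCast {G : Type*} [AddCommGroup G] (f : R → G) (d : ℕ) :
    (Δ_[1])^[d] (fun n : ℕ => f n) = fun n : ℕ => (Δ_[1])^[d] f n := by
  funext n
  simp [fwdDiff_iter_eq_sum_shift]

lemma aeval_seqShift_X_sub_C_pow_mul_pow (a : R) (u : ℕ → R) (d : ℕ) :
    aeval (seqShift R) ((X - C a) ^ d) (fun n => u n * a ^ n)
      = fun n => a ^ d * (Δ_[1])^[d] u n * a ^ n := by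
  induction d with
  | zero => simp
  | succ d ih =>
    rw [pow_succ', map_mul, Module.End.mul_apply, ih]
    funext n
    simp [fwdDiff, Function.iterate_succ_apply', Module.algebraMap_end_apply]
    ring

lemma aeval_seqShift_eq_zero_of_dvd {a : R} {P q : R[X]} {d : ℕ} (hq : (X - C a) ^ d ∣ q)
    (hP : P.natDegree < d) : aeval (seqShift R) q (fun n => P.eval (n : R) * a ^ n) = 0 := by
  obtain ⟨q, rfl⟩ := hq
  rw [mul_comm, map_mul, Module.End.mul_apply, aeval_seqShift_X_sub_C_pow_mul_pow,
    fwdDiff_iter_comp_natCast P.eval, fwdDiff_iter_eq_zero_of_degree_lt hP]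
  simp only [Pi.zero_apply, mul_zero, zero_mul]
  exact map_zero _

variable (R) in
noncomputable def polynomialSeq : Submodule R (ℕ → R) :=
  LinearMap.range (LinearMap.pi fun n : ℕ => leval (n : R))

lemma mem_polynomialSeq {u : ℕ → R} :
    u ∈ polynomialSeq R ↔ ∃ Q : R[X], ∀ n : ℕ, u n = Q.eval (n : R) := by
  simp [polynomialSeq, funext_iff, eq_comm]

lemma aeval_seqShift_mem_polynomialSeq (q : R[X]) {u : ℕ → R} (hu : u ∈ polynomialSeq R) :
    aeval (seqShift R) q u ∈ polynomialSeq R := by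
  refine aeval_apply_smul_mem_of_le_comap hu q _ fun v hv => ?_
  obtain ⟨Q, hQ⟩ := mem_polynomialSeq.1 hv
  exact mem_polynomialSeq.2 ⟨Q.comp (X + 1), fun n => by simp [hQ]⟩

lemma aeval_seqShift_expPoly_mem_polynomialSeq {ι : Type*} (s : Finset ι) (a : ι → R)
    (P : ι → R[X]) (q : R[X]) (hq : ∀ i ∈ s, a i ≠ 1 → (X - C (a i)) ^ ((P i).natDegree + 1) ∣ q) :
    aeval (seqShift R) q (fun n => ∑ i ∈ s, (P i).eval (n : R) * a i ^ n) ∈ polynomialSeq R := by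
  rw [← Finset.sum_fn, map_sum]
  refine Submodule.sum_mem _ fun i hi => ?_
  by_cases ha : a i = 1
  · refine aeval_seqShift_mem_polynomialSeq q (mem_polynomialSeq.2 ⟨P i, fun n => ?_⟩)
    simp [ha]
  · rw [aeval_seqShift_eq_zero_of_dvd (hq i hi ha) (Nat.lt_succ_self _)]
    exact zero_mem _

end Algebra

section Asymptotics

variable {s : ℝ} {u : ℕ → ℂ} {L : ℂ}

lemma tendsto_rpow_mul_comp_add
    (h : Tendsto (fun n : ℕ => (((n : ℝ) ^ s : ℝ) : ℂ) * u n) atTop (𝓝 L)) (j : ℕ) :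
    Tendsto (fun n : ℕ => (((n : ℝ) ^ s : ℝ) : ℂ) * u (n + j)) atTop (𝓝 L) := by
  have hratio : Tendsto (fun n : ℕ => ((((n : ℝ) / (n + j)) ^ s : ℝ) : ℂ)) atTop (𝓝 1) := by
    have := ((tendsto_natCast_div_add_atTop (j : ℝ)).rpow_const (p := s) (Or.inl one_ne_zero))
    simpa [Function.comp_def] using (Complex.continuous_ofReal.tendsto _).comp this
  have hshift := h.comp (tendsto_add_atTop_nat j)
  refine (one_mul L ▸ hratio.mul hshift).congr' ?_
  filter_upwards [eventually_gt_atTop 0] with n hn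
  have hpos : (0 : ℝ) < n := Nat.cast_pos.2 hn
  have hnj : (0 : ℝ) < n + j := by positivity
  have hpow : ((((n : ℝ) + j) ^ s : ℝ) : ℂ) ≠ 0 := by
    exact_mod_cast (Real.rpow_pos_of_pos hnj s).ne'
  simp only [Function.comp_apply, Nat.cast_add, Real.div_rpow hpos.le hnj.le]
  push_cast
  field_simp

lemma tendsto_rpow_mul_aeval_seqShift (q : ℂ[X])
    (h : Tendsto (fun n : ℕ => (((n : ℝ) ^ s : ℝ) : ℂ) * u n) atTop (𝓝 L)) :
    Tendsto (fun n : ℕ => (((n : ℝ) ^ s : ℝ) : ℂ) * aeval (seqShift ℂ) q u n) atTop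
      (𝓝 (q.eval 1 * L)) := by
  simp only [aeval_seqShift_apply, Finset.mul_sum, eval_eq_sum_range, one_pow, mul_one,
    Finset.sum_mul]
  refine tendsto_finsetSum _ fun j _ => ?_
  simpa only [mul_left_comm] using (tendsto_rpow_mul_comp_add h j).const_mul (q.coeff j)

lemma tendsto_zero_of_tendsto_rpow_mul (hs : 0 < s)
    (h : Tendsto (fun n : ℕ => (((n : ℝ) ^ s : ℝ) : ℂ) * u n) atTop (𝓝 L)) :
    Tendsto u atTop (𝓝 0) := by
  have hdecay : Tendsto (fun n : ℕ => (((n : ℝ) ^ (-s) : ℝ) : ℂ)) atTop (𝓝 0) := by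
    simpa [Function.comp_def] using (Complex.continuous_ofReal.tendsto 0).comp
      ((tendsto_rpow_neg_atTop hs).comp tendsto_natCast_atTop_atTop)
  refine (mul_zero L ▸ h.mul hdecay).congr' ?_
  filter_upwards [eventually_gt_atTop 0] with n hn
  rw [mul_right_comm, ← Complex.ofReal_mul, ← Real.rpow_add (Nat.cast_pos.2 hn), add_neg_cancel,
    Real.rpow_zero, Complex.ofReal_one, one_mul]

end Asymptotics

theorem Polynomial.eq_zero_of_tendsto_eval_zero {α R : Type*} [NormedRing R]
    [IsAbsoluteValue (norm : R → ℝ)] {l : Filter α} [l.NeBot] {z : α → R}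
    (hz : Tendsto (fun x => ‖z x‖) l atTop) {Q : R[X]}
    (hQ : Tendsto (fun x => Q.eval (z x)) l (𝓝 0)) : Q = 0 := by
  rcases lt_or_ge 0 Q.degree with hdeg | hdeg
  · exact absurd (Q.tendsto_norm_atTop hdeg hz) (not_tendsto_atTop_of_tendsto_nhds hQ.norm)
  · rw [eq_C_of_degree_le_zero hdeg] at hQ ⊢
    simpa using hQ

lemma eq_zero_of_tendsto_rpow_mul_of_mem_polynomialSeq {s : ℝ} {u : ℕ → ℂ} {L : ℂ}
    (hu : u ∈ polynomialSeq ℂ) (hs : 0 < s)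
    (h : Tendsto (fun n : ℕ => (((n : ℝ) ^ s : ℝ) : ℂ) * u n) atTop (𝓝 L)) : L = 0 := by
  obtain ⟨Q, hQ⟩ := mem_polynomialSeq.1 hu
  have hnorm : Tendsto (fun n : ℕ => ‖(n : ℂ)‖) atTop atTop := by
    simpa using tendsto_natCast_atTop_atTop (R := ℝ)
  have hQ0 : Q = 0 := Q.eq_zero_of_tendsto_eval_zero hnorm
    ((tendsto_zero_of_tendsto_rpow_mul hs h).congr hQ)
  simp only [hQ, hQ0, eval_zero, mul_zero] at h
  exact tendsto_nhds_unique h tendsto_const_nhds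

theorem exponential_polynomial_no_power_law_decay_general
    (m : ℕ) (α : Fin m → ℂ)
    (p : Fin m → Polynomial ℂ)
    (f : ℕ → ℂ)
    (hf : ∀ r : ℕ, f r = ∑ i : Fin m, (p i).eval (r : ℂ) * (α i) ^ r) :
    ∀ s : ℝ, 0 < s → ∀ c : ℂ,
      Filter.Tendsto (fun r : ℕ => (((r : ℝ) ^ s : ℝ) : ℂ) * f r) Filter.atTop (nhds c) →
      c = 0 := by
  intro s hs c hc
  set T := Finset.univ.filter fun i => α i ≠ 1
  set q := ∏ i ∈ T, (X - C (α i)) ^ ((p i).natDegree + 1)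
  have hq1 : q.eval 1 ≠ 0 := by
    simp only [q, eval_prod, eval_pow, eval_sub, eval_X, eval_C]
    exact Finset.prod_ne_zero_iff.2 fun i hi =>
      pow_ne_zero _ (sub_ne_zero.2 (Finset.mem_filter.1 hi).2.symm)
  have hmem : aeval (seqShift ℂ) q f ∈ polynomialSeq ℂ := by
    rw [funext hf]
    exact aeval_seqShift_expPoly_mem_polynomialSeq _ _ _ _ fun i _ hi =>
      Finset.dvd_prod_of_mem _ (by simp [T, hi])
  have hlim := eq_zero_of_tendsto_rpow_mul_of_mem_polynomialSeq hmem hs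
    (tendsto_rpow_mul_aeval_seqShift q hc)
  exact (mul_eq_zero.1 hlim).resolve_left hq1

/-- An exponential polynomial `f(r) = ∑ᵢ pᵢ(r) αᵢ^r` with distinct nonzero bases can
never be asymptotic to a nonzero multiple of a power law `r^{-s}` with `s > 0`:
if `r^s f(r) → c` then `c = 0`. -/
theorem exponential_polynomial_no_power_law_decay
    (m : ℕ) (α : Fin m → ℂ) (hα_inj : Function.Injective α)
    (hα_ne : ∀ i, α i ≠ 0)
    (p : Fin m → Polynomial ℂ)
    (f : ℕ → ℂ)
    (hf : ∀ r : ℕ, f r = ∑ i : Fin m, (p i).eval (r : ℂ) * (α i) ^ r) :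
    ∀ s : ℝ, 0 < s → ∀ c : ℂ,
      Filter.Tendsto (fun r : ℕ => (((r : ℝ) ^ s : ℝ) : ℂ) * f r) Filter.atTop (nhds c) →
      c = 0 :=
  exponential_polynomial_no_power_law_decay_general m α p f hf
end

section
/- For every real φ with 0 < φ < π/2 and every integer r ≥ 1, ∫_0^{2π} sin(r k) · sin k · (sin φ)/(1 + cos φ · cos k) dk = 2π · (sin φ/(1 + sin φ)) · z^{r−1}, where z := −(1 − sin φ)/cos φ (which satisfies |z| < 1). -/
/-!
With `z = -(1 - sin φ) / cos φ` one has
`1 + cos φ cos k = (1 + sin φ) / 2 · |1 - z e^{ik}|²`, and for `|z| < 1` the geometric series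
gives `sin k / |1 - z e^{ik}|² = ∑ zⁿ sin ((n + 1) k)`. Integrating against `sin (r k)`,
orthogonality of the sines keeps only the term `n = r - 1`. Instead of
interchanging sum and integral we truncate the series at `N ≥ r`: the remainder is
`zᴺ (sin ((N + 1) k) - z sin (N k)) / |1 - z e^{ik}|²`, uniformly `O(|z|ᴺ)`.
-/

open Real Filter Topology intervalIntegral

theorem integral_cos_int_mul (j : ℤ) :
    ∫ x in (0 : ℝ)..2 * π, cos (j * x) = if j = 0 then 2 * π else 0 := by
  split_ifs with hj
  · simp [hj]
  · have hj' : (j : ℝ) ≠ 0 := Int.cast_ne_zero.mpr hj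
    rw [integral_comp_mul_left (fun x => cos x) hj', integral_cos, mul_zero, sin_zero, sub_zero,
      show (j : ℝ) * (2 * π) = (2 * j : ℤ) * π by push_cast; ring, sin_int_mul_pi, smul_zero]

theorem integral_sin_nat_mul_mul_sin_nat_mul {m : ℕ} (hm : m ≠ 0) (n : ℕ) :
    ∫ x in (0 : ℝ)..2 * π, sin (m * x) * sin (n * x) = if m = n then π else 0 := by
  have hprod : ∀ x : ℝ, sin (m * x) * sin (n * x)
      = (cos (((m - n : ℤ) : ℝ) * x) - cos (((m + n : ℤ) : ℝ) * x)) / 2 := fun x => by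
    have := two_mul_sin_mul_sin (m * x) (n * x)
    push_cast; rw [sub_mul, add_mul, ← this]; ring
  have hcos : ∀ j : ℤ,
      IntervalIntegrable (fun x : ℝ => cos (j * x)) MeasureTheory.volume 0 (2 * π) :=
    fun j => by apply Continuous.intervalIntegrable; fun_prop
  simp only [hprod, integral_div, integral_sub (hcos _) (hcos _), integral_cos_int_mul]
  split_ifs <;> first | omega | ring

/-- `|1 - z e^{ik}|²`, the denominator of the Poisson kernel. -/
noncomputable def poissonDenom (z k : ℝ) : ℝ := 1 - 2 * z * cos k + z ^ 2

theorem continuous_poissonDenom (z : ℝ) : Continuous (poissonDenom z) := by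
  unfold poissonDenom; fun_prop

theorem sq_one_sub_abs_le_poissonDenom (z k : ℝ) : (1 - |z|) ^ 2 ≤ poissonDenom z k := by
  have hzcos : z * cos k ≤ |z| := by
    calc z * cos k ≤ |z * cos k| := le_abs_self _
      _ ≤ |z| := by rw [abs_mul]; exact mul_le_of_le_one_right (abs_nonneg z) (abs_cos_le_one k)
  unfold poissonDenom
  nlinarith [sq_abs z]

theorem poissonDenom_pos {z : ℝ} (hz : |z| < 1) (k : ℝ) : 0 < poissonDenom z k :=
  (pow_pos (sub_pos.mpr hz) 2).trans_le (sq_one_sub_abs_le_poissonDenom z k)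

theorem sin_eq_poissonDenom_mul_sum_add (z k : ℝ) (N : ℕ) :
    sin k = poissonDenom z k * ∑ n ∈ Finset.range N, z ^ n * sin ((n + 1) * k)
      + z ^ N * (sin ((N + 1) * k) - z * sin (N * k)) := by
  induction N with
  | zero => simp
  | succ N ih =>
    have hsucc : sin ((N + 1 + 1) * k) = sin ((N + 1) * k) * cos k + cos ((N + 1) * k) * sin k := by
      rw [← sin_add]; ring_nf
    have hpred : sin (N * k) = sin ((N + 1) * k) * cos k - cos ((N + 1) * k) * sin k := by
      rw [← sin_sub]; ring_nf
    rw [Finset.sum_range_succ]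
    push_cast
    rw [hpred] at ih
    rw [hsucc]
    unfold poissonDenom at ih ⊢
    linear_combination ih

theorem integral_sin_mul_sin_div_poissonDenom_eq_add {z : ℝ} (hz : |z| < 1) {r N : ℕ}
    (hr : r ≠ 0) (hN : r ≤ N) :
    ∫ k in (0 : ℝ)..2 * π, sin (r * k) * sin k / poissonDenom z k
      = π * z ^ (r - 1) + z ^ N * ∫ k in (0 : ℝ)..2 * π,
          sin (r * k) * (sin ((N + 1) * k) - z * sin (N * k)) / poissonDenom z k := by
  have hD : Continuous (poissonDenom z) := continuous_poissonDenom z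
  have hD0 : ∀ k, poissonDenom z k ≠ 0 := fun k => (poissonDenom_pos hz k).ne'
  have hexpand : ∀ k, sin (r * k) * sin k / poissonDenom z k
      = ∑ n ∈ Finset.range N, z ^ n * (sin (r * k) * sin ((n + 1 : ℕ) * k))
        + z ^ N * (sin (r * k) * (sin ((N + 1) * k) - z * sin (N * k)) / poissonDenom z k) := by
    intro k
    calc sin (r * k) * sin k / poissonDenom z k = sin (r * k) * (sin k / poissonDenom z k) :=
          mul_div_assoc _ _ _
      _ = sin (r * k) * (∑ n ∈ Finset.range N, z ^ n * sin ((n + 1) * k)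
            + z ^ N * ((sin ((N + 1) * k) - z * sin (N * k)) / poissonDenom z k)) := by
          conv_lhs => rw [sin_eq_poissonDenom_mul_sum_add z k N]
          rw [add_div, mul_div_cancel_left₀ _ (hD0 k), mul_div_assoc]
      _ = _ := by
          rw [mul_add, Finset.mul_sum]
          push_cast
          congr 1
          · exact Finset.sum_congr rfl fun n _ => by ring
          · ring
  have hterm : ∀ n ∈ Finset.range N, IntervalIntegrable
      (fun k => z ^ n * (sin (r * k) * sin ((n + 1 : ℕ) * k))) MeasureTheory.volume 0 (2 * π) :=
    fun n _ => by apply Continuous.intervalIntegrable; fun_prop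
  have hrem : IntervalIntegrable (fun k => z ^ N *
      (sin (r * k) * (sin ((N + 1) * k) - z * sin (N * k)) / poissonDenom z k))
      MeasureTheory.volume 0 (2 * π) :=
    (continuous_const.mul ((by fun_prop : Continuous fun k : ℝ =>
      sin (r * k) * (sin ((N + 1) * k) - z * sin (N * k))).div hD hD0)).intervalIntegrable _ _
  simp only [hexpand]
  rw [integral_add (by apply Continuous.intervalIntegrable; fun_prop) hrem,
    integral_finsetSum hterm, integral_const_mul]
  simp only [integral_const_mul, integral_sin_nat_mul_mul_sin_nat_mul hr]
  rw [Finset.sum_eq_single (r - 1)]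
  · rw [if_pos (by omega), mul_comm]
  · intro n _ hn
    rw [if_neg (by omega), mul_zero]
  · intro h
    exact absurd (Finset.mem_range.mpr (by omega)) h

theorem abs_integral_sin_mul_remainder_div_poissonDenom_le {z : ℝ} (hz : |z| < 1) (r N : ℕ) :
    |∫ k in (0 : ℝ)..2 * π,
        sin (r * k) * (sin ((N + 1) * k) - z * sin (N * k)) / poissonDenom z k|
      ≤ 2 / (1 - |z|) ^ 2 * (2 * π) := by
  have hbound : ∀ k, |sin (r * k) * (sin ((N + 1) * k) - z * sin (N * k)) / poissonDenom z k|
      ≤ 2 / (1 - |z|) ^ 2 := by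
    intro k
    have hdiff : |sin ((N + 1) * k) - z * sin (N * k)| ≤ 2 := by
      calc |sin ((N + 1) * k) - z * sin (N * k)| ≤ |sin ((N + 1) * k)| + |z| * |sin (N * k)| := by
            rw [← abs_mul]; exact abs_sub _ _
        _ ≤ 1 + 1 * 1 := by gcongr <;> exact abs_sin_le_one _
        _ = 2 := by norm_num
    have hnum : |sin (r * k) * (sin ((N + 1) * k) - z * sin (N * k))| ≤ 2 := by
      rw [abs_mul, ← one_mul 2]
      exact mul_le_mul (abs_sin_le_one _) hdiff (abs_nonneg _) zero_le_one
    rw [abs_div, abs_of_pos (poissonDenom_pos hz k)]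
    exact div_le_div₀ zero_le_two hnum (pow_pos (sub_pos.mpr hz) 2)
      (sq_one_sub_abs_le_poissonDenom z k)
  have := norm_integral_le_of_norm_le_const (a := 0) (b := 2 * π) fun k _ =>
    (Real.norm_eq_abs _).trans_le (hbound k)
  simpa [abs_of_pos two_pi_pos] using this

theorem integral_sin_mul_sin_div_poissonDenom {z : ℝ} (hz : |z| < 1) {r : ℕ} (hr : r ≠ 0) :
    ∫ k in (0 : ℝ)..2 * π, sin (r * k) * sin k / poissonDenom z k = π * z ^ (r - 1) := by
  set C := 2 / (1 - |z|) ^ 2 * (2 * π)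
  have herr : ∀ N ≥ r, |(∫ k in (0 : ℝ)..2 * π, sin (r * k) * sin k / poissonDenom z k)
      - π * z ^ (r - 1)| ≤ C * |z| ^ N := by
    intro N hN
    rw [integral_sin_mul_sin_div_poissonDenom_eq_add hz hr hN, add_sub_cancel_left, abs_mul,
      abs_pow, mul_comm C]
    exact mul_le_mul_of_nonneg_left
      (abs_integral_sin_mul_remainder_div_poissonDenom_le hz r N) (by positivity)
  have hlim : Tendsto (fun N : ℕ => C * |z| ^ N) atTop (𝓝 0) := by
    simpa using (tendsto_pow_atTop_nhds_zero_of_lt_one (abs_nonneg z) hz).const_mul C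
  have := ge_of_tendsto hlim (eventually_atTop.mpr ⟨r, herr⟩)
  exact sub_eq_zero.mp (abs_nonpos_iff.mp this)

theorem one_add_cos_mul_cos_eq (φ k : ℝ) (hφ : cos φ ≠ 0) :
    1 + cos φ * cos k = (1 + sin φ) / 2 * poissonDenom (-(1 - sin φ) / cos φ) k := by
  unfold poissonDenom
  field_simp
  linear_combination (1 - sin φ + 2 * cos φ * cos k) * sin_sq_add_cos_sq φ

theorem abs_neg_one_sub_sin_div_cos_lt_one {φ : ℝ} (hφ0 : 0 < φ) (hφ1 : φ < π / 2) :
    |-(1 - sin φ) / cos φ| < 1 := by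
  have hs : 0 < sin φ := sin_pos_of_pos_of_lt_pi hφ0 (by linarith [pi_pos])
  have hc : 0 < cos φ := cos_pos_of_mem_Ioo ⟨by linarith, hφ1⟩
  have hs1 : sin φ ≤ 1 := sin_le_one φ
  rw [abs_div, abs_neg, abs_of_nonneg (sub_nonneg.mpr hs1), abs_of_pos hc, div_lt_one hc]
  nlinarith [sin_sq_add_cos_sq φ]

/-- Residue-theorem evaluation for the quasifree fermionic XY-chain example: for
`0 < φ < π/2`, `r ≥ 1`, and `z = -(1 - sin φ)/cos φ` (which satisfies `|z| < 1`),
`∫_0^{2π} sin(rk) sin k sin φ/(1 + cos φ cos k) dk = 2π (sin φ/(1 + sin φ)) z^{r-1}`. -/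
theorem integral_xy_chain_covariance
    (φ : ℝ) (hφ0 : 0 < φ) (hφ1 : φ < π / 2) (r : ℕ) (hr : 1 ≤ r) :
    ∫ k in (0 : ℝ)..(2 * π),
        Real.sin (r * k) * Real.sin k * Real.sin φ / (1 + Real.cos φ * Real.cos k) =
      2 * π * (Real.sin φ / (1 + Real.sin φ)) *
        (-(1 - Real.sin φ) / Real.cos φ) ^ (r - 1) := by
  have hc : 0 < cos φ := cos_pos_of_mem_Ioo ⟨by linarith, hφ1⟩
  set z := -(1 - sin φ) / cos φ
  have hz : |z| < 1 := abs_neg_one_sub_sin_div_cos_lt_one hφ0 hφ1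
  have hfactor : ∀ k, 1 + cos φ * cos k = (1 + sin φ) / 2 * poissonDenom z k :=
    fun k => one_add_cos_mul_cos_eq φ k hc.ne'
  clear_value z
  calc ∫ k in (0 : ℝ)..(2 * π), sin (r * k) * sin k * sin φ / (1 + cos φ * cos k)
      = ∫ k in (0 : ℝ)..(2 * π),
          2 * sin φ / (1 + sin φ) * (sin (r * k) * sin k / poissonDenom z k) :=
        integral_congr fun k _ => by
          have hD := (poissonDenom_pos hz k).ne'
          rw [hfactor k]
          field_simp
    _ = 2 * π * (sin φ / (1 + sin φ)) * z ^ (r - 1) := by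
        rw [integral_const_mul, integral_sin_mul_sin_div_poissonDenom hz (by omega)]
        ring
end
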